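/- arXiv:2605.24482 — 2 statements merged into one kernel-verified Lean document; each statement's English description precedes it below -/
import Mathlib

section
/- Let 1 < p < q < γ be real numbers. Define c_{p,q,γ} = ((γ-q)/(γ-p)) · ((q-p)/(γ-p))^((q-p)/(γ-q)) and c_{e,p,q,γ} = (p(γ-q))/(q(γ-p)) · ((γ(q-p))/(q(γ-p)))^((q-p)/(γ-q)). Then c_{p,q,γ} > c_{e,p,q,γ}. -/
open Real

/-- Taking logarithms, this is `log x < x - 1` combined with `1 - θ < -log θ`. -/
theorem rpow_one_sub_div_sub_one_lt_inv {θ x : ℝ} (hθ₀ : 0 < θ) (hθ₁ : θ < 1) (hx : 1 < x) :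
    x ^ ((1 - θ) / (x - 1)) < θ⁻¹ := by
  have hx₀ : 0 < x := one_pos.trans hx
  rw [← exp_log (inv_pos.2 hθ₀), rpow_def_of_pos hx₀, exp_lt_exp, log_inv]
  calc log x * ((1 - θ) / (x - 1))
      < (x - 1) * ((1 - θ) / (x - 1)) :=
        mul_lt_mul_of_pos_right (log_lt_sub_one_of_pos hx₀ hx.ne')
          (div_pos (sub_pos.2 hθ₁) (sub_pos.2 hx))
    _ = 1 - θ := by field_simp [(sub_pos.2 hx).ne']
    _ < -log θ := by linarith [log_lt_sub_one_of_pos hθ₀ hθ₁.ne]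

theorem stmt_1 (p q γ : ℝ) (hp : 1 < p) (hpq : p < q) (hqγ : q < γ) :
    (p * (γ - q)) / (q * (γ - p)) *
      ((γ * (q - p)) / (q * (γ - p))) ^ ((q - p) / (γ - q))
    < (γ - q) / (γ - p) * ((q - p) / (γ - p)) ^ ((q - p) / (γ - q)) := by
  have hp₀ : 0 < p := one_pos.trans hp
  have hq₀ : 0 < q := hp₀.trans hpq
  have hγp : 0 < γ - p := by linarith
  have hqp : 0 < q - p := sub_pos.2 hpq
  have hθx : (1 - p / q) / (γ / q - 1) = (q - p) / (γ - q) := by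
    field_simp [(sub_pos.2 hqγ).ne']
  set e := (q - p) / (γ - q)
  -- The ratio of the two sides is `(p / q) * (γ / q) ^ e`, with `θ = p / q` and `x = γ / q`.
  have hratio : p / q * (γ / q) ^ e < 1 := by
    have h := rpow_one_sub_div_sub_one_lt_inv (div_pos hp₀ hq₀) ((div_lt_one hq₀).2 hpq)
      ((one_lt_div hq₀).2 hqγ)
    rw [hθx, inv_div] at h
    calc p / q * (γ / q) ^ e < p / q * (q / p) := mul_lt_mul_of_pos_left h (div_pos hp₀ hq₀)
      _ = 1 := by field_simp
  have hsplit : (γ * (q - p)) / (q * (γ - p)) = γ / q * ((q - p) / (γ - p)) := by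
    rw [mul_div_mul_comm]
  rw [hsplit, mul_rpow (div_pos (hq₀.trans hqγ) hq₀).le (div_pos hqp hγp).le]
  calc p * (γ - q) / (q * (γ - p)) * ((γ / q) ^ e * ((q - p) / (γ - p)) ^ e)
      = (p / q * (γ / q) ^ e) * ((γ - q) / (γ - p) * ((q - p) / (γ - p)) ^ e) := by
        field_simp
    _ < (γ - q) / (γ - p) * ((q - p) / (γ - p)) ^ e :=
        mul_lt_of_lt_one_left
          (mul_pos (div_pos (sub_pos.2 hqγ) hγp) (rpow_pos_of_pos (div_pos hqp hγp) e))
          hratio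
end

section
/- Let 1 < q < γ, and let 0 < σ_a ≤ â, 0 < σ_b ≤ b̂. For (α,β) ∈ [σ_a, â] × [σ_b, b̂] set j_{α,β}(s) = -(α/q)s^q + (β/γ)s^γ and ρ(α,β) = (α/β)^{1/(γ-q)}. Then for every η > 0 there exists κ_η > 0 such that j_{α,β}(s) - j_{α,β}(ρ(α,β)) ≥ κ_η for all s ≥ 0 and all (α,β) ∈ [σ_a, â] × [σ_b, b̂] with |s - ρ(α,β)| ≥ η. -/
/-!
For fixed parameters, `ρ` is the unique minimiser of `j_{α,β}` on `[0, ∞)`: substituting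
`u = (s / ρ) ^ q` turns `j(s) > j(ρ)` into the strict Bernoulli inequality with exponent `γ / q`.
For large `s` the gap `j(s) - j(ρ)` is at least `1` uniformly, because `j_{α,β} ≥ j_{â,σ_b}` on `[0, ∞)`,
`j(ρ) ≤ j(0) = 0`, and `j_{â,σ_b}(s) → ∞`. On the remaining bounded region the gap is a continuous,
positive function on a compact set of triples `(α, β, s)`, hence bounded below by some `κ > 0`.
-/

open Real Set Filter

noncomputable def powerPotential (q γ α β s : ℝ) : ℝ := -(α / q) * s ^ q + (β / γ) * s ^ γ

noncomputable def powerPotentialArgmin (q γ α β : ℝ) : ℝ := (α / β) ^ (1 / (γ - q))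

section
variable {q γ α β : ℝ}

lemma powerPotentialArgmin_pos (hα : 0 < α) (hβ : 0 < β) : 0 < powerPotentialArgmin q γ α β :=
  rpow_pos_of_pos (div_pos hα hβ) _

lemma mul_rpow_powerPotentialArgmin (hqγ : q < γ) (hα : 0 < α) (hβ : 0 < β) :
    β * powerPotentialArgmin q γ α β ^ γ = α * powerPotentialArgmin q γ α β ^ q := by
  have hr := powerPotentialArgmin_pos (q := q) (γ := γ) hα hβ
  have hsub : powerPotentialArgmin q γ α β ^ (γ - q) = α / β := by
    rw [powerPotentialArgmin, ← rpow_mul (div_pos hα hβ).le,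
      one_div_mul_cancel (sub_pos.2 hqγ).ne', rpow_one]
  have hsplit : powerPotentialArgmin q γ α β ^ γ
      = powerPotentialArgmin q γ α β ^ q * powerPotentialArgmin q γ α β ^ (γ - q) := by
    rw [← rpow_add hr, add_sub_cancel]
  rw [hsplit, hsub]
  field_simp

theorem powerPotential_argmin_lt (hq : 0 < q) (hqγ : q < γ) (hα : 0 < α) (hβ : 0 < β)
    {s : ℝ} (hs : 0 ≤ s) (hne : s ≠ powerPotentialArgmin q γ α β) :
    powerPotential q γ α β (powerPotentialArgmin q γ α β) < powerPotential q γ α β s := by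
  have hγ : 0 < γ := hq.trans hqγ
  set r := powerPotentialArgmin q γ α β
  have hr : 0 < r := powerPotentialArgmin_pos hα hβ
  set u := (s / r) ^ q
  set p := γ / q
  have hsq : s ^ q = r ^ q * u := by
    rw [show u = (s / r) ^ q from rfl, div_rpow hs hr.le]; field_simp
  have hsγ : s ^ γ = r ^ γ * u ^ p := by
    rw [← rpow_mul (div_nonneg hs hr.le), mul_div_cancel₀ _ hq.ne', div_rpow hs hr.le]
    field_simp
  have hu1 : u ≠ 1 := by
    intro h
    rw [← one_rpow q, rpow_left_inj (div_nonneg hs hr.le) zero_le_one hq.ne',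
      div_eq_one_iff_eq hr.ne'] at h
    exact hne h
  have bernoulli : 1 + p * (u - 1) < (1 + (u - 1)) ^ p :=
    one_add_mul_self_lt_rpow_one_add (by linarith [show 0 ≤ u by positivity]) (sub_ne_zero.2 hu1)
      ((one_lt_div hq).2 hqγ)
  rw [add_sub_cancel] at bernoulli
  have hA : 0 < α * r ^ q / γ := by positivity
  have hpA : α * r ^ q / γ * (1 + p * (u - 1)) = α * r ^ q / γ + α * r ^ q / q * (u - 1) := by
    simp only [p]; field_simp
  have hβr : β / γ * r ^ γ = α * r ^ q / γ := by
    rw [div_mul_eq_mul_div, mul_rpow_powerPotentialArgmin hqγ hα hβ]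
  have key := mul_lt_mul_of_pos_left bernoulli hA
  rw [hpA] at key
  simp only [powerPotential, hsq, hsγ]
  linear_combination key - (u ^ p - 1) * hβr

lemma powerPotential_zero (hq : q ≠ 0) (hγ : γ ≠ 0) : powerPotential q γ α β 0 = 0 := by
  simp [powerPotential, zero_rpow hq, zero_rpow hγ]

lemma powerPotential_argmin_nonpos (hq : 0 < q) (hqγ : q < γ) (hα : 0 < α) (hβ : 0 < β) :
    powerPotential q γ α β (powerPotentialArgmin q γ α β) ≤ 0 :=
  powerPotential_zero (α := α) (β := β) hq.ne' (hq.trans hqγ).ne' ▸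
    (powerPotential_argmin_lt hq hqγ hα hβ le_rfl (powerPotentialArgmin_pos hα hβ).ne).le

lemma powerPotential_le_powerPotential (hq : 0 < q) (hγ : 0 < γ) {α' β' s : ℝ} (hα : α ≤ α')
    (hβ : β' ≤ β) (hs : 0 ≤ s) : powerPotential q γ α' β' s ≤ powerPotential q γ α β s := by
  unfold powerPotential
  gcongr

lemma tendsto_powerPotential_atTop (hq : 0 < q) (hqγ : q < γ) (hβ : 0 < β) :
    Tendsto (powerPotential q γ α β) atTop atTop := by
  have hγ : 0 < γ := hq.trans hqγ
  have hfactor : Tendsto (fun s => β / γ * s ^ (γ - q) - α / q) atTop atTop :=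
    tendsto_atTop_add_const_right _ _
      ((tendsto_rpow_atTop (sub_pos.2 hqγ)).const_mul_atTop (by positivity))
  refine ((tendsto_rpow_atTop hq).atTop_mul_atTop₀ hfactor).congr' ?_
  filter_upwards [eventually_gt_atTop 0] with s hs
  rw [powerPotential, mul_sub, mul_left_comm, ← rpow_add hs, add_sub_cancel]
  ring

lemma continuous_powerPotential (hq : 0 ≤ q) (hγ : 0 ≤ γ) :
    Continuous fun p : (ℝ × ℝ) × ℝ => powerPotential q γ p.1.1 p.1.2 p.2 := by
  unfold powerPotential
  fun_prop (disch := assumption)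

lemma continuousOn_powerPotentialArgmin (hqγ : q ≤ γ) :
    ContinuousOn (fun ab : ℝ × ℝ => powerPotentialArgmin q γ ab.1 ab.2) {ab | ab.2 ≠ 0} :=
  (continuousOn_fst.div continuousOn_snd fun _ h => h).rpow_const fun _ _ =>
    Or.inr (one_div_nonneg.2 (sub_nonneg.2 hqγ))

theorem exists_pos_le_powerPotential_sub_argmin_of_bounded (hq : 0 < q) (hqγ : q < γ)
    {σa σb η : ℝ} (hσa : 0 < σa) (hσb : 0 < σb) (hη : 0 < η) (ahat bhat M : ℝ) :
    ∃ κ, 0 < κ ∧ ∀ α ∈ Icc σa ahat, ∀ β ∈ Icc σb bhat, ∀ s ∈ Icc 0 M,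
      η ≤ |s - powerPotentialArgmin q γ α β| →
        κ ≤ powerPotential q γ α β s - powerPotential q γ α β (powerPotentialArgmin q γ α β) := by
  set box := (Icc σa ahat ×ˢ Icc σb bhat) ×ˢ Icc 0 M
  have hbox : box ⊆ {p | p.1.2 ≠ 0} := fun p hp => (hσb.trans_le hp.1.2.1).ne'
  have hargmin : ContinuousOn (fun p : (ℝ × ℝ) × ℝ => powerPotentialArgmin q γ p.1.1 p.1.2) box :=
    (continuousOn_powerPotentialArgmin hqγ.le).comp continuousOn_fst fun _ hp => hbox hp
  have hK : IsCompact (box ∩ (fun p => |p.2 - powerPotentialArgmin q γ p.1.1 p.1.2|) ⁻¹' Ici η) :=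
    ((isCompact_Icc.prod isCompact_Icc).prod isCompact_Icc).of_isClosed_subset
      ((continuousOn_snd.sub hargmin).abs.preimage_isClosed_of_isClosed
        ((isClosed_Icc.prod isClosed_Icc).prod isClosed_Icc) isClosed_Ici)
      inter_subset_left
  have hgap : ContinuousOn (fun p : (ℝ × ℝ) × ℝ => powerPotential q γ p.1.1 p.1.2 p.2 -
      powerPotential q γ p.1.1 p.1.2 (powerPotentialArgmin q γ p.1.1 p.1.2)) box :=
    (continuous_powerPotential hq.le (hq.trans hqγ).le).continuousOn.sub
      ((continuous_powerPotential hq.le (hq.trans hqγ).le).comp_continuousOn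
        (continuousOn_fst.prodMk hargmin))
  obtain ⟨κ, hκ, hle⟩ := hK.exists_forall_le' (hgap.mono inter_subset_left) (a := 0)
    fun ⟨⟨α, β⟩, s⟩ ⟨⟨⟨hα, hβ⟩, hs⟩, hsη⟩ => sub_pos.2 <|
      powerPotential_argmin_lt hq hqγ (hσa.trans_le hα.1) (hσb.trans_le hβ.1) hs.1
        (sub_ne_zero.1 (abs_pos.1 (hη.trans_le hsη)))
  exact ⟨κ, hκ, fun α hα β hβ s hs hsη => hle ((α, β), s) ⟨⟨⟨hα, hβ⟩, hs⟩, hsη⟩⟩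

theorem exists_one_le_powerPotential_sub_argmin_of_large (hq : 0 < q) (hqγ : q < γ)
    {σa σb : ℝ} (hσa : 0 < σa) (hσb : 0 < σb) (ahat : ℝ) :
    ∃ M, ∀ α ∈ Icc σa ahat, ∀ β, σb ≤ β → ∀ s, M ≤ s →
      1 ≤ powerPotential q γ α β s - powerPotential q γ α β (powerPotentialArgmin q γ α β) := by
  obtain ⟨M, hM⟩ := ((tendsto_powerPotential_atTop (α := ahat) hq hqγ hσb).eventually_ge_atTop
    1).exists_forall_of_atTop
  refine ⟨max M 0, fun α hα β hβ s hs => ?_⟩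
  calc 1 ≤ powerPotential q γ ahat σb s := hM s (le_of_max_le_left hs)
    _ ≤ powerPotential q γ α β s :=
      powerPotential_le_powerPotential hq (hq.trans hqγ) hα.2 hβ (le_of_max_le_right hs)
    _ ≤ _ := (le_sub_self_iff _).2 <|
      powerPotential_argmin_nonpos hq hqγ (hσa.trans_le hα.1) (hσb.trans_le hβ)

end

theorem stmt_8_general (q γ σa σb ahat bhat : ℝ) (hq : 1 < q) (hqγ : q < γ)
    (hσa : 0 < σa) (hσb : 0 < σb)
    (j : ℝ → ℝ → ℝ → ℝ)
    (hj : ∀ α β s, j α β s = -(α / q) * s ^ q + (β / γ) * s ^ γ)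
    (ρ : ℝ → ℝ → ℝ) (hρ : ∀ α β, ρ α β = (α / β) ^ (1 / (γ - q)))
    (η : ℝ) (hη : 0 < η) :
    ∃ κ : ℝ, 0 < κ ∧
      ∀ α β s : ℝ, α ∈ Set.Icc σa ahat → β ∈ Set.Icc σb bhat →
        0 ≤ s → η ≤ |s - ρ α β| →
          κ ≤ j α β s - j α β (ρ α β) := by
  obtain rfl : j = powerPotential q γ := funext fun α => funext fun β => funext (hj α β)
  obtain rfl : ρ = powerPotentialArgmin q γ := funext fun α => funext (hρ α)
  have hq₀ : 0 < q := one_pos.trans hq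
  obtain ⟨M, hfar⟩ := exists_one_le_powerPotential_sub_argmin_of_large hq₀ hqγ hσa hσb ahat
  obtain ⟨κ, hκ, hnear⟩ :=
    exists_pos_le_powerPotential_sub_argmin_of_bounded hq₀ hqγ hσa hσb hη ahat bhat M
  refine ⟨min κ 1, lt_min hκ one_pos, fun α β s hα hβ hs hsη => ?_⟩
  rcases le_total s M with hsM | hMs
  · exact (min_le_left _ _).trans (hnear α hα β hβ s ⟨hs, hsM⟩ hsη)
  · exact (min_le_right _ _).trans (hfar α hα β hβ.1 s hMs)

theorem stmt_8 (q γ σa σb ahat bhat : ℝ) (hq : 1 < q) (hqγ : q < γ)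
    (hσa : 0 < σa) (ha : σa ≤ ahat) (hσb : 0 < σb) (hb : σb ≤ bhat)
    (j : ℝ → ℝ → ℝ → ℝ)
    (hj : ∀ α β s, j α β s = -(α / q) * s ^ q + (β / γ) * s ^ γ)
    (ρ : ℝ → ℝ → ℝ) (hρ : ∀ α β, ρ α β = (α / β) ^ (1 / (γ - q)))
    (η : ℝ) (hη : 0 < η) :
    ∃ κ : ℝ, 0 < κ ∧
      ∀ α β s : ℝ, α ∈ Set.Icc σa ahat → β ∈ Set.Icc σb bhat →
        0 ≤ s → η ≤ |s - ρ α β| →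
          κ ≤ j α β s - j α β (ρ α β) :=
  stmt_8_general q γ σa σb ahat bhat hq hqγ hσa hσb j hj ρ hρ η hη
end
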